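/- Relative-distinctness of block-maximum output functions in one dimension: let n ≥ 1, let g : ℤ → ℝ be strictly monotone increasing, and define u_x(g) = max { g(⌊x/n⌋·n + i) | i ∈ {0, …, n − 1} } for x ∈ ℤ. Then for every x ∈ ℤ and all Δ₁, Δ₂ ∈ {0, …, n − 1} with Δ₁ ≠ Δ₂, u_{x − Δ₁}(T_{−Δ₁}(g)) ≠ u_{x − Δ₂}(T_{−Δ₂}(g)). -/
import Mathlib


/-- The shift operator: `T t g x = g (x - t)`. -/
noncomputable def T (t : ℤ) (g : ℤ → ℝ) : ℤ → ℝ := fun x => g (x - t)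

/-- The block-maximum output function with block size `n`:
`u n hn g x = max { g (⌊x/n⌋·n + i) | i ∈ {0, …, n − 1} }`
(integer division rounds toward negative infinity). -/
noncomputable def u (n : ℕ) (hn : 1 ≤ n) (g : ℤ → ℝ) (x : ℤ) : ℝ :=
  (Finset.range n).sup' (Finset.nonempty_range_iff.mpr (by omega))
    (fun i => g ((x / (n : ℤ)) * (n : ℤ) + (i : ℤ)))

lemma u_eval (n : ℕ) (hn : 1 ≤ n) (g : ℤ → ℝ) (hg : StrictMono g) (x : ℤ) :
    u n hn g x = g ((x / (n : ℤ)) * (n : ℤ) + ((n : ℤ) - 1)) := by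
  apply le_antisymm
  · apply Finset.sup'_le
    intro i hi
    apply hg.monotone
    have : (i : ℤ) ≤ (n : ℤ) - 1 := by
      have := Finset.mem_range.mp hi; omega
    omega
  · have hmem : n - 1 ∈ Finset.range n := Finset.mem_range.mpr (by omega)
    rw [show ((n : ℤ) - 1) = ((n - 1 : ℕ) : ℤ) by omega]
    exact Finset.le_sup' (fun i : ℕ => g ((x / (n : ℤ)) * (n : ℤ) + (i : ℤ))) hmem

/-- Relative-distinctness of block-maximum output functions in one dimension:
for strictly increasing `g` and distinct offsets `Δ₁, Δ₂ ∈ {0, …, n − 1}`,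
`u_{x − Δ₁}(T_{−Δ₁}(g)) ≠ u_{x − Δ₂}(T_{−Δ₂}(g))`. -/
theorem stmt_10 (n : ℕ) (hn : 1 ≤ n) (g : ℤ → ℝ) (hg : StrictMono g)
    (x : ℤ) (Δ₁ Δ₂ : ℤ)
    (h1 : 0 ≤ Δ₁) (h1' : Δ₁ < (n : ℤ)) (h2 : 0 ≤ Δ₂) (h2' : Δ₂ < (n : ℤ))
    (hne : Δ₁ ≠ Δ₂) :
    u n hn (T (-Δ₁) g) (x - Δ₁) ≠ u n hn (T (-Δ₂) g) (x - Δ₂) := by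
  have hT : ∀ Δ : ℤ, StrictMono (T (-Δ) g) := by
    intro Δ a b hab
    exact hg (by omega)
  rw [u_eval n hn _ (hT Δ₁), u_eval n hn _ (hT Δ₂)]
  simp only [T, sub_neg_eq_add]
  intro h
  have harg := hg.injective h
  have d1 : ((n : ℤ)) ∣ ((x - Δ₁) / (n : ℤ)) * (n : ℤ) := dvd_mul_left _ _
  have d2 : ((n : ℤ)) ∣ ((x - Δ₂) / (n : ℤ)) * (n : ℤ) := dvd_mul_left _ _
  obtain ⟨k1, hk1⟩ := d1
  obtain ⟨k2, hk2⟩ := d2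
  rw [hk1, hk2] at harg
  have : Δ₁ - Δ₂ = (n : ℤ) * (k2 - k1) := by linear_combination harg
  have hdvd : (n : ℤ) ∣ Δ₁ - Δ₂ := ⟨k2 - k1, this⟩
  have := Int.eq_zero_of_abs_lt_dvd hdvd (by rw [abs_lt]; omega)
  omega
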